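/- Let k be a nonzero integer and let σ̂_1^{(k)} ∈ Aut(F_n) be the automorphism taking x_1 to x_1^k x_2 x_1^{−k}, x_2 to x_1, and fixing all other free generators. If w ∈ F_n has reduced word of the form x_1^k u x_1^{−k}, where u is a nonempty reduced word that neither begins nor ends with a letter x_1^{±1}, then the reduced word of σ̂_1^{(k)}(w) is of the form x_1^k u' x_1^{−k}, where u' is a nonempty reduced word that neither begins nor ends with a letter x_1^{±1}. -/

import Mathlib

/-!
Write `a = x₁`, `b = x₂` and let `ψ = (conjugation by a⁻ᵏ) ∘ σ̂₁⁽ᵏ⁾`: it swaps `a` and `b` and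
sends every other generator `y` to `a⁻ᵏ y aᵏ`. Then `σ̂₁⁽ᵏ⁾(aᵏ u a⁻ᵏ) = aᵏ (bᵏ ψ(u) b⁻ᵏ) a⁻ᵏ`, so it
suffices that the reduced word of `ψ(u)` is nonempty and neither begins nor ends with `b^{±1}`:
then `bᵏ ψ(u) b⁻ᵏ` is reduced as written and `u' = bᵏ ψ(u) b⁻ᵏ` works.

Under `ψ` a run `bᵉ` becomes `aᵉ`, a letter `a^{±1}` becomes `b^{±1}` and any other letter `y^{±1}`
becomes `a⁻ᵏ y^{±1} aᵏ`. Only the resulting powers of `a` can merge. If two source letters other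
than `b^{±1}` are inverse to each other, their conjugating exponents agree, so the power of `a`
between their images is the exponent of the `b`-run between them; it vanishes only if that run
is empty, which reducedness of the source word excludes. Hence, for a reduced word `R` not
starting with `b`, the reduced word of `aᵈ ψ(R)` is `a^{d-δ}` followed by the first letter of `R`
with `a` and `b` swapped, where `δ` is `k` or `0` according as that letter lies outside `{a, b}`
or not. For `u` not starting with `a` this shows that `ψ(u)` does not start with `b`; the last
letter is handled through `u⁻¹`.
-/

namespace FreeGroup

section

variable {α : Type*}

theorem IsReduced.append_of_fst_ne {L₁ L₂ : List (α × Bool)} (h₁ : IsReduced L₁)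
    (h₂ : IsReduced L₂) (h : ∀ x ∈ L₁.getLast?, ∀ y ∈ L₂.head?, x.1 ≠ y.1) :
    IsReduced (L₁ ++ L₂) :=
  List.isChain_append.2 ⟨h₁, h₂, fun x hx y hy hxy => absurd hxy (h x hx y hy)⟩

theorem mk_singleton (x : α) (s : Bool) : mk [(x, s)] = of x ^ (if s then 1 else -1 : ℤ) := by
  cases s
  · rw [if_neg Bool.false_ne_true, zpow_neg_one, of, inv_mk]; rfl
  · rw [if_pos rfl, zpow_one]; rfl

theorem exists_mk_eq_of_zpow {b : α} {L : List (α × Bool)} (h : ∀ p ∈ L, p.1 = b) :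
    ∃ e : ℤ, mk L = of b ^ e := by
  induction L with
  | nil => exact ⟨0, rfl⟩
  | cons p L ih =>
    obtain ⟨e, he⟩ := ih fun q hq => h q (List.mem_cons_of_mem p hq)
    obtain ⟨x, s⟩ := p
    obtain rfl : x = b := h _ List.mem_cons_self
    refine ⟨(if s then 1 else -1) + e, ?_⟩
    rw [show (x, s) :: L = [(x, s)] ++ L from rfl, ← mul_mk, mk_singleton, he, zpow_add]

structure IsSwapConj (ψ : FreeGroup α →* FreeGroup α) (a b : α) (k : ℤ) : Prop where
  map_of_left : ψ (of a) = of b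
  map_of_right : ψ (of b) = of a
  map_of_ne {x : α} : x ≠ a → x ≠ b → ψ (of x) = of a ^ (-k) * of x * of a ^ k

end

variable {α : Type*} [DecidableEq α]

theorem IsReduced.toWord_mk {L : List (α × Bool)} (h : IsReduced L) : (mk L).toWord = L := by
  rw [FreeGroup.toWord_mk, h.reduce_eq]

theorem toWord_of_zpow (a : α) (c : ℤ) :
    (of a ^ c).toWord = List.replicate c.natAbs (a, decide (0 ≤ c)) := by
  obtain ⟨n, rfl | rfl⟩ := Int.eq_nat_or_neg c
  · simp [toWord_of_pow]
  · rcases n with _ | n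
    · simp
    · rw [zpow_neg, zpow_natCast, toWord_inv, toWord_of_pow]
      simp [invRev]
      omega

theorem fst_eq_of_mem_toWord_of_zpow {a : α} {c : ℤ} {p : α × Bool}
    (hp : p ∈ (of a ^ c).toWord) : p.1 = a := by
  rw [toWord_of_zpow] at hp
  rw [List.eq_of_mem_replicate hp]

theorem toWord_of_zpow_ne_nil (a : α) {c : ℤ} (hc : c ≠ 0) : (of a ^ c).toWord ≠ [] := by
  simpa [toWord_of_zpow] using hc

theorem forall_mem_head?_toWord_of_zpow_append (a : α) {c : ℤ} (hc : c ≠ 0)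
    (T : List (α × Bool)) : ∀ p ∈ ((of a ^ c).toWord ++ T).head?, p.1 = a := by
  rw [List.head?_append_of_ne_nil _ (toWord_of_zpow_ne_nil a hc)]
  exact fun p hp => fst_eq_of_mem_toWord_of_zpow (List.mem_of_mem_head? hp)

theorem isReduced_toWord_of_zpow_append (a : α) (c : ℤ) {T : List (α × Bool)}
    (hT : IsReduced T) (hTa : ∀ p ∈ T.head?, p.1 ≠ a) : IsReduced ((of a ^ c).toWord ++ T) :=
  isReduced_toWord.append_of_fst_ne hT fun _ hx y hy hxy =>
    hTa y hy (hxy ▸ fst_eq_of_mem_toWord_of_zpow (List.mem_of_getLast? hx))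

theorem exists_mk_eq_of_zpow_mul (b : α) {L : List (α × Bool)} (hL : IsReduced L) :
    ∃ (e : ℤ) (R : List (α × Bool)), mk L = of b ^ e * mk R ∧ IsReduced R ∧
      R.length ≤ L.length ∧ (∀ p ∈ R.head?, p.1 ≠ b) ∧ (e = 0 → R = L) := by
  set run := L.takeWhile (fun p => p.1 = b)
  set R := L.dropWhile (fun p => p.1 = b)
  have hsplit : run ++ R = L := List.takeWhile_append_dropWhile
  obtain ⟨e, he⟩ := exists_mk_eq_of_zpow (b := b) (L := run) fun p hp => by
    simpa using List.mem_takeWhile_imp hp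
  refine ⟨e, R, ?_, hL.infix (List.dropWhile_suffix _).isInfix, List.length_dropWhile_le _ _,
    fun p hp => ?_, ?_⟩
  · rw [← he, mul_mk, hsplit]
  · have := List.head?_dropWhile_not (fun p : α × Bool => decide (p.1 = b)) L
    rw [Option.mem_def.1 hp] at this
    simpa using this
  · rintro rfl
    have hrun : IsReduced run := hL.infix (List.takeWhile_prefix _).isInfix
    have : run = [] := by rw [← hrun.toWord_mk, he, zpow_zero, toWord_one]
    rw [← hsplit, this, List.nil_append]

theorem forall_mem_getLast?_toWord_iff_inv {g : FreeGroup α} {P : α → Prop} :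
    (∀ p ∈ g.toWord.getLast?, P p.1) ↔ ∀ p ∈ g⁻¹.toWord.head?, P p.1 := by
  rw [toWord_inv, invRev, List.head?_reverse, List.getLast?_map]
  rcases g.toWord.getLast? with _ | p <;> simp

theorem toWord_of_zpow_mul_mul_of_zpow (b : α) (i j : ℤ) {m : FreeGroup α} (hm : m ≠ 1)
    (hhead : ∀ p ∈ m.toWord.head?, p.1 ≠ b) (hlast : ∀ p ∈ m.toWord.getLast?, p.1 ≠ b) :
    (of b ^ i * m * of b ^ j).toWord = (of b ^ i).toWord ++ m.toWord ++ (of b ^ j).toWord := by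
  have hleft : IsReduced ((of b ^ i).toWord ++ m.toWord) :=
    isReduced_toWord.append_of_fst_ne isReduced_toWord fun x hx y hy hxy =>
      hhead y hy (hxy ▸ fst_eq_of_mem_toWord_of_zpow (List.mem_of_mem_getLast? hx))
  have hred : IsReduced ((of b ^ i).toWord ++ m.toWord ++ (of b ^ j).toWord) := by
    refine hleft.append_of_fst_ne isReduced_toWord fun x hx y hy hxy => ?_
    rw [List.getLast?_append_of_ne_nil _ (toWord_eq_nil_iff.not.2 hm)] at hx
    exact hlast x hx (hxy.trans (fst_eq_of_mem_toWord_of_zpow (List.mem_of_mem_head? hy)))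
  rw [← hred.toWord_mk, ← mul_mk, ← mul_mk, mk_toWord, mk_toWord, mk_toWord]

def swapLetter (a b : α) (p : α × Bool) : α × Bool := (Equiv.swap a b p.1, p.2)

theorem swapLetter_fst_ne_left {a b : α} {l : α × Bool} (hl : l.1 ≠ b) :
    (swapLetter a b l).1 ≠ a := by
  simpa [swapLetter, Equiv.swap_apply_eq_iff] using hl

/-- The exponent `d` with `ψ (first letter) = a⁻ᵈ * (swapped first letter) * aᵈ`. -/
def leadConjExp (a : α) (k : ℤ) : List (α × Bool) → ℤ
  | [] => 0
  | p :: _ => if p.1 = a then 0 else k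

namespace IsSwapConj

variable {ψ : FreeGroup α →* FreeGroup α} {a b : α} {k : ℤ}

theorem map_mk_singleton (hψ : IsSwapConj ψ a b k) {l : α × Bool} (hl : l.1 ≠ b) :
    ψ (FreeGroup.mk [l]) = of a ^ (-leadConjExp a k [l]) * FreeGroup.mk [swapLetter a b l] *
      of a ^ leadConjExp a k [l] := by
  obtain ⟨x, s⟩ := l
  rw [swapLetter, mk_singleton, mk_singleton, map_zpow]
  by_cases hxa : x = a
  · subst hxa
    simp [leadConjExp, hψ.map_of_left]
  · have hconj (g : FreeGroup α) :
        of a ^ (-k) * g * of a ^ k = MulAut.conj (of a ^ (-k)) g := by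
      rw [MulAut.conj_apply, zpow_neg, inv_inv]
    rw [hψ.map_of_ne hxa hl, Equiv.swap_apply_of_ne_of_ne hxa hl, hconj, ← map_zpow, ← hconj]
    simp [leadConjExp, hxa]

theorem toWord_of_zpow_mul_map_mk (hψ : IsSwapConj ψ a b k) (R : List (α × Bool))
    (hR : IsReduced R) (hRb : ∀ p ∈ R.head?, p.1 ≠ b) :
    ∃ T, T.head? = R.head?.map (swapLetter a b) ∧ ∀ d : ℤ,
      (of a ^ d * ψ (FreeGroup.mk R)).toWord = (of a ^ (d - leadConjExp a k R)).toWord ++ T := by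
  induction hn : R.length using Nat.strong_induction_on generalizing R with
  | _ n ih =>
  rcases R with _ | ⟨l, R'⟩
  · exact ⟨[], rfl, fun d => by simp [leadConjExp, ← one_eq_mk]⟩
  have hl : l.1 ≠ b := hRb l rfl
  obtain ⟨hlR', hR'red⟩ := List.isChain_cons.1 hR
  obtain ⟨e, R'', hR', hR'', hlen, hR''b, he⟩ := exists_mk_eq_of_zpow_mul b hR'red
  obtain ⟨T'', hT''head, hT''⟩ :=
    ih R''.length (by simp only [List.length_cons] at hn; omega) R'' hR'' hR''b rfl
  set c := leadConjExp a k [l] + e - leadConjExp a k R''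
  set W := (of a ^ c).toWord ++ T'' with hW
  have hWmk : FreeGroup.mk W = of a ^ (leadConjExp a k [l] + e) * ψ (FreeGroup.mk R'') := by
    rw [hW, ← hT'', mk_toWord]
  have hlW : IsReduced (swapLetter a b l :: W) := by
    refine List.isChain_cons.2 ⟨fun y hy hly => ?_, by rw [hW, ← hT'']; exact isReduced_toWord⟩
    by_cases hc : c = 0
    · -- `q` has the generator of `l`, so `c = 0` forces `e = 0`: `q` follows `l` in `R`.
      obtain ⟨q, hq, rfl⟩ : ∃ q ∈ R''.head?, swapLetter a b q = y := by
        simpa [W, hc, hT''head] using hy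
      have hlq : l.1 = q.1 := (Equiv.swap a b).injective hly
      obtain ⟨R''', rfl⟩ := List.head?_eq_some_iff.1 hq
      have : e = 0 := by simpa [c, leadConjExp, hlq] using hc
      exact hlR' q (by rw [← he this]; rfl) hlq
    · exact absurd (hly ▸ forall_mem_head?_toWord_of_zpow_append a hc T'' y hy)
        (swapLetter_fst_ne_left hl)
  refine ⟨swapLetter a b l :: W, rfl, fun d => ?_⟩
  have hmk : of a ^ d * ψ (FreeGroup.mk (l :: R')) =
      FreeGroup.mk ((of a ^ (d - leadConjExp a k [l])).toWord ++ swapLetter a b l :: W) := by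
    rw [show l :: R' = [l] ++ R' from rfl, ← mul_mk, _root_.map_mul, hR', _root_.map_mul,
      map_zpow, hψ.map_of_right, hψ.map_mk_singleton hl,
      show swapLetter a b l :: W = [swapLetter a b l] ++ W from rfl, ← mul_mk, ← mul_mk, hWmk,
      mk_toWord]
    group
  rw [hmk, (isReduced_toWord_of_zpow_append a _ hlW ?_).toWord_mk]
  · rfl
  · simpa using swapLetter_fst_ne_left hl

theorem map_ne_one_and_forall_mem_head? (hψ : IsSwapConj ψ a b k) (hab : a ≠ b)
    {u : FreeGroup α} (hu : u ≠ 1) (hua : ∀ p ∈ u.toWord.head?, p.1 ≠ a) :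
    ψ u ≠ 1 ∧ ∀ p ∈ (ψ u).toWord.head?, p.1 ≠ b := by
  obtain ⟨e, R, hu', hR, -, hRb, he⟩ := exists_mk_eq_of_zpow_mul b (isReduced_toWord (x := u))
  obtain ⟨T, hThead, hT⟩ := hψ.toWord_of_zpow_mul_map_mk R hR hRb
  have hword : (ψ u).toWord = (of a ^ (e - leadConjExp a k R)).toWord ++ T := by
    rw [← hT, ← mk_toWord (x := u), hu', _root_.map_mul, map_zpow, hψ.map_of_right]
  rw [Ne, ← toWord_eq_nil_iff, hword]
  by_cases hc : e - leadConjExp a k R = 0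
  · rw [hc, zpow_zero, toWord_one, List.nil_append]
    rcases R with _ | ⟨q, R⟩
    · simp only [leadConjExp, sub_zero] at hc
      exact absurd (toWord_eq_nil_iff.1 (he hc).symm) hu
    refine ⟨fun hT0 => by simp [hT0] at hThead, fun p hp hpb => ?_⟩
    obtain rfl : swapLetter a b q = p := by simpa [hThead] using hp
    have hqa : q.1 = a := by simpa [swapLetter, Equiv.swap_apply_eq_iff] using hpb
    exact hua q (by rw [← he (by simpa [leadConjExp, hqa] using hc)]; rfl) hqa
  · exact ⟨List.append_ne_nil_of_left_ne_nil (toWord_of_zpow_ne_nil a hc) _,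
      fun p hp hpb => hab (hpb ▸ forall_mem_head?_toWord_of_zpow_append a hc T p hp).symm⟩

theorem forall_mem_getLast?_toWord_map (hψ : IsSwapConj ψ a b k) (hab : a ≠ b)
    {u : FreeGroup α} (hu : u ≠ 1) (hua : ∀ p ∈ u.toWord.getLast?, p.1 ≠ a) :
    ∀ p ∈ (ψ u).toWord.getLast?, p.1 ≠ b := by
  refine forall_mem_getLast?_toWord_iff_inv (P := (· ≠ b)) |>.2 ?_
  rw [← _root_.map_inv]
  exact (hψ.map_ne_one_and_forall_mem_head? hab (inv_ne_one.2 hu)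
    (forall_mem_getLast?_toWord_iff_inv (P := (· ≠ a)) |>.1 hua)).2

end IsSwapConj

end FreeGroup

open FreeGroup in
/-- Let `σ̂_1^{(k)} ∈ Aut(F_n)` be the automorphism with `x_1 ↦ x_1^k x_2 x_1^{-k}`,
`x_2 ↦ x_1`, fixing all other free generators (`k ≠ 0`). If `w ∈ F_n` has reduced
word of the form `x_1^k u x_1^{-k}` with `u` a nonempty reduced word neither
beginning nor ending with a letter `x_1^{±1}`, then the reduced word of
`σ̂_1^{(k)}(w)` has the same form `x_1^k u' x_1^{-k}`, with `u'` nonempty and neither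
beginning nor ending with a letter `x_1^{±1}`. -/
theorem wada_type1_sigma1hat_preserves_form (n : ℕ) (hn : 2 ≤ n) (k : ℤ) (hk : k ≠ 0)
    (φ : MulAut (FreeGroup (Fin n)))
    (hφ1 : φ (FreeGroup.of (⟨0, by omega⟩ : Fin n)) =
      FreeGroup.of (⟨0, by omega⟩ : Fin n) ^ k * FreeGroup.of (⟨1, by omega⟩ : Fin n) *
        FreeGroup.of (⟨0, by omega⟩ : Fin n) ^ (-k))
    (hφ2 : φ (FreeGroup.of (⟨1, by omega⟩ : Fin n)) = FreeGroup.of (⟨0, by omega⟩ : Fin n))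
    (hφ3 : ∀ j : Fin n, j ≠ ⟨0, by omega⟩ → j ≠ ⟨1, by omega⟩ →
      φ (FreeGroup.of j) = FreeGroup.of j)
    (w u : FreeGroup (Fin n)) (hu : u ≠ 1)
    (huhead : ∀ p ∈ u.toWord.head?, p.1 ≠ (⟨0, by omega⟩ : Fin n))
    (hulast : ∀ p ∈ u.toWord.getLast?, p.1 ≠ (⟨0, by omega⟩ : Fin n))
    (hw : w = FreeGroup.of (⟨0, by omega⟩ : Fin n) ^ k * u *
      FreeGroup.of (⟨0, by omega⟩ : Fin n) ^ (-k)) :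
    ∃ u' : FreeGroup (Fin n), u' ≠ 1 ∧
      (∀ p ∈ u'.toWord.head?, p.1 ≠ (⟨0, by omega⟩ : Fin n)) ∧
      (∀ p ∈ u'.toWord.getLast?, p.1 ≠ (⟨0, by omega⟩ : Fin n)) ∧
      φ w = FreeGroup.of (⟨0, by omega⟩ : Fin n) ^ k * u' *
        FreeGroup.of (⟨0, by omega⟩ : Fin n) ^ (-k) := by
  set a : Fin n := ⟨0, by omega⟩
  set b : Fin n := ⟨1, by omega⟩
  have hab : a ≠ b := by simp [a, b, Fin.ext_iff]
  set ψ : FreeGroup (Fin n) →* FreeGroup (Fin n) :=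
    (MulAut.conj (of a ^ (-k))).toMonoidHom.comp φ.toMonoidHom
  have hψ_apply (g : FreeGroup (Fin n)) : ψ g = of a ^ (-k) * φ g * of a ^ k := by
    change MulAut.conj (of a ^ (-k)) (φ g) = _
    rw [MulAut.conj_apply, zpow_neg, inv_inv]
  have hψ : IsSwapConj ψ a b k :=
    ⟨by rw [hψ_apply, hφ1]; group, by rw [hψ_apply, hφ2]; group,
      fun hxa hxb => by rw [hψ_apply, hφ3 _ hxa hxb]⟩
  obtain ⟨hne, hhead⟩ := hψ.map_ne_one_and_forall_mem_head? hab hu huhead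
  have hword := toWord_of_zpow_mul_mul_of_zpow b k (-k) hne hhead
    (hψ.forall_mem_getLast?_toWord_map hab hu hulast)
  refine ⟨of b ^ k * ψ u * of b ^ (-k), ?_, fun p hp => ?_, fun p hp => ?_, ?_⟩
  · rw [Ne, ← toWord_eq_nil_iff, hword, List.append_assoc]
    exact List.append_ne_nil_of_left_ne_nil (toWord_of_zpow_ne_nil b hk) _
  · rw [hword, List.append_assoc] at hp
    exact (forall_mem_head?_toWord_of_zpow_append b hk _ p hp).symm ▸ hab.symm
  · rw [hword, List.getLast?_append_of_ne_nil _ (toWord_of_zpow_ne_nil b (neg_ne_zero.2 hk))] at hp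
    exact (fst_eq_of_mem_toWord_of_zpow (List.mem_of_mem_getLast? hp)).symm ▸ hab.symm
  · have hφa (j : ℤ) : φ (of a ^ j) = of a ^ k * of b ^ j * of a ^ (-k) := by
      rw [map_zpow, hφ1, zpow_neg, conj_zpow]
    rw [hw, _root_.map_mul, _root_.map_mul, hφa, hφa, hψ_apply]
    group
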